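/- Let μ be a monotonic probability measure on [0,1] and let A, B ⊆ [0,1] be nonempty intervals of positive length satisfying inf A ≤ inf B and sup A ≤ sup B. Then μ(A)/m(A) ≥ μ(B)/m(B), where m is Lebesgue measure. -/

import Mathlib

/-!
Let `G t = μ (-∞, t)`. A monotonic measure has no atoms in `(0, 1]` (an atom would shift to
uncountably many atoms at least as heavy), so monotonicity says that the increments
`G (t + h) - G t` decrease in `t` on `[0, 1]`. A nondecreasing function with decreasing increments
is concave: cutting `[x, y]` into `n` steps of equal length and covering `[y, z]` by steps of the
same length gives the three-slope inequality up to an error `O(1/n)`. The average density of `μ`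
on `[u, v]` is the chord slope of `G` over `[u, v]`, and the chord slopes of a concave function
decrease when both endpoints move to the right.
-/

open MeasureTheory Set

/-- A probability measure on `[0,1]` is *monotonic* if `μ(A) ≥ μ((A+x) ∩ [0,1])`
for every interval `A ⊆ [0,1]` and every `x ∈ [0,1]`. -/
def MonotonicMeasure (μ : Measure ℝ) : Prop :=
  ∀ a b : ℝ, Set.Icc a b ⊆ Set.Icc 0 1 →
    ∀ x ∈ Set.Icc (0:ℝ) 1,
      μ ((fun y => y + x) '' Set.Icc a b ∩ Set.Icc 0 1) ≤ μ (Set.Icc a b)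

open Filter Topology

def IncrementsAntiOn (f : ℝ → ℝ) (s : Set ℝ) : Prop :=
  ∀ ⦃u v h : ℝ⦄, u ∈ s → v + h ∈ s → u ≤ v → 0 ≤ h → f (v + h) - f v ≤ f (u + h) - f u

lemma sub_eq_sum_range_steps (f : ℝ → ℝ) (p h : ℝ) (n : ℕ) :
    f (p + n * h) - f p = ∑ k ∈ Finset.range n, (f (p + k * h + h) - f (p + k * h)) := by
  have := Finset.sum_range_sub (fun k : ℕ => f (p + k * h)) n
  simp only [Nat.cast_add, Nat.cast_one, Nat.cast_zero, zero_mul, add_zero] at this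
  rw [← this]
  exact Finset.sum_congr rfl fun k _ => by ring_nf

namespace IncrementsAntiOn

variable {f : ℝ → ℝ} {s : Set ℝ} {x y z : ℝ}

lemma mul_last_step_le_sub (hf : IncrementsAntiOn f s) (hs : s.OrdConnected) {p h : ℝ} {n : ℕ}
    (hp : p ∈ s) (hpn : p + n * h ∈ s) (hh : 0 ≤ h) :
    n * (f (p + n * h) - f (p + n * h - h)) ≤ f (p + n * h) - f p := by
  have hstep : ∀ k ∈ Finset.range n,
      f (p + n * h) - f (p + n * h - h) ≤ f (p + k * h + h) - f (p + k * h) := fun k hk => by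
    have hk : (k : ℝ) + 1 ≤ n := by exact_mod_cast Finset.mem_range.mp hk
    have := hf (u := p + k * h) (v := p + n * h - h) (h := h)
      (hs.out hp hpn ⟨by nlinarith, by nlinarith⟩) (by simpa using hpn) (by nlinarith) hh
    simpa only [sub_add_cancel] using this
  calc n * (f (p + n * h) - f (p + n * h - h))
      = (Finset.range n).card • (f (p + n * h) - f (p + n * h - h)) := by simp
    _ ≤ _ := Finset.card_nsmul_le_sum _ _ _ hstep
    _ = f (p + n * h) - f p := (sub_eq_sum_range_steps f p h n).symm

lemma sub_le_mul_step (hf : IncrementsAntiOn f s) (hs : s.OrdConnected) {u p h : ℝ} {m : ℕ}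
    (hu : u ∈ s) (hup : u ≤ p) (hpm : p + m * h ∈ s) (hh : 0 ≤ h) :
    f (p + m * h) - f p ≤ m * (f (u + h) - f u) := by
  have hstep : ∀ k ∈ Finset.range m,
      f (p + k * h + h) - f (p + k * h) ≤ f (u + h) - f u := fun k hk => by
    have hk : (k : ℝ) + 1 ≤ m := by exact_mod_cast Finset.mem_range.mp hk
    have hk0 : (0 : ℝ) ≤ k := k.cast_nonneg
    exact hf hu (hs.out hu hpm ⟨by nlinarith, by nlinarith⟩) (by nlinarith) hh
  calc f (p + m * h) - f p = _ := sub_eq_sum_range_steps f p h m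
    _ ≤ (Finset.range m).card • (f (u + h) - f u) := Finset.sum_le_card_nsmul _ _ _ hstep
    _ = m * (f (u + h) - f u) := by simp

lemma sub_mul_le_sub_mul_add (hf : IncrementsAntiOn f s) (hmono : MonotoneOn f s)
    (hs : s.OrdConnected) (hx : x ∈ s) (hz : z ∈ s) (hxy : x < y) (hyz : y < z)
    {n : ℕ} (hn : 0 < n) :
    (f z - f y) * (y - x) ≤ (f y - f x) * (z - y + (y - x) / n) := by
  have hn' : (1 : ℝ) ≤ n := by exact_mod_cast hn
  set h := (y - x) / n with h_def
  have hh : 0 < h := div_pos (by linarith) (by linarith)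
  have hnh : n * h = y - x := by rw [h_def]; field_simp
  have hhle : h ≤ y - x := by rw [← hnh]; nlinarith
  set m := ⌈(z - y) / h⌉₊
  have hmh : z - y ≤ m * h := (div_le_iff₀ hh).mp (Nat.le_ceil _)
  have hmh' : m * h < z - y + h := by
    have := Nat.ceil_lt_add_one (div_pos (by linarith : 0 < z - y) hh).le
    rw [← sub_lt_iff_lt_add, ← sub_one_mul]
    calc ((m : ℝ) - 1) * h < (z - y) / h * h := by gcongr; linarith
      _ = z - y := by field_simp
  have hmem : ∀ t, x ≤ t → t ≤ z → t ∈ s := fun t hxt htz => hs.out hx hz ⟨hxt, htz⟩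
  have hy : y ∈ s := hmem y hxy.le hyz.le
  -- `[x, y]` is cut into `n` steps of length `h`, and `[z - m h, z] ⊇ [y, z]` into `m` of them;
  -- all the former are at least, all the latter at most, the step `c` ending at `y`
  set c := f y - f (y - h)
  have hleft : n * c ≤ f y - f x := by
    have := hf.mul_last_step_le_sub hs hx (by rwa [hnh, add_sub_cancel]) hh.le
    rwa [hnh, add_sub_cancel] at this
  have hright : f z - f y ≤ m * c := by
    have hp : y - h ≤ z - m * h := by linarith
    calc f z - f y ≤ f z - f (z - m * h) :=
          sub_le_sub_left (hmono (hmem _ (by linarith) (by linarith)) hy (by linarith)) _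
      _ ≤ m * c := by
        have := hf.sub_le_mul_step hs (hmem _ (by linarith) (by linarith)) hp
          (by rwa [sub_add_cancel]) hh.le
        rwa [sub_add_cancel, sub_add_cancel] at this
  have hD : 0 ≤ f y - f x := sub_nonneg.mpr (hmono hx hy hxy.le)
  calc (f z - f y) * (y - x) = (f z - f y) * n * h := by rw [← hnh]; ring
    _ ≤ m * (n * c) * h := by
      have := mul_le_mul_of_nonneg_right hright n.cast_nonneg
      exact mul_le_mul_of_nonneg_right (by linarith) hh.le
    _ ≤ m * (f y - f x) * h := by gcongr
    _ = (f y - f x) * (m * h) := by ring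
    _ ≤ (f y - f x) * (z - y + h) := by gcongr

lemma slope_anti_adjacent (hf : IncrementsAntiOn f s) (hmono : MonotoneOn f s)
    (hs : s.OrdConnected) (hx : x ∈ s) (hz : z ∈ s) (hxy : x < y) (hyz : y < z) :
    (f z - f y) / (z - y) ≤ (f y - f x) / (y - x) := by
  rw [div_le_div_iff₀ (by linarith) (by linarith)]
  have hlim : Tendsto (fun n : ℕ => (f y - f x) * (z - y + (y - x) / n)) atTop
      (𝓝 ((f y - f x) * (z - y))) := by
    simpa using ((tendsto_const_div_atTop_nhds_zero_nat (y - x)).const_add (z - y)).const_mul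
      (f y - f x)
  refine ge_of_tendsto hlim ?_
  filter_upwards [eventually_gt_atTop 0] with n hn
  exact hf.sub_mul_le_sub_mul_add hmono hs hx hz hxy hyz hn

lemma concaveOn (hf : IncrementsAntiOn f s) (hmono : MonotoneOn f s) (hs : Convex ℝ s) :
    ConcaveOn ℝ s f :=
  concaveOn_of_slope_anti_adjacent hs fun hx hz hxy hyz =>
    hf.slope_anti_adjacent hmono hs.ordConnected hx hz hxy hyz

end IncrementsAntiOn

lemma ConcaveOn.slope_le_slope {f : ℝ → ℝ} {s : Set ℝ} (hf : ConcaveOn ℝ s f) {a a' b b' : ℝ}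
    (ha : a ∈ s) (ha' : a' ∈ s) (hb : b ∈ s) (hb' : b' ∈ s) (haa' : a < a') (hbb' : b < b')
    (hab : a ≤ b) (hab' : a' ≤ b') :
    slope f b b' ≤ slope f a a' :=
  calc slope f b b' = slope f b' b := slope_comm _ _ _
    _ ≤ slope f b' a := hf.slope_anti hb' ⟨ha, (haa'.trans_le hab').ne⟩ ⟨hb, hbb'.ne⟩ hab
    _ = slope f a b' := slope_comm _ _ _
    _ ≤ slope f a a' := hf.slope_anti ha ⟨ha', haa'.ne'⟩ ⟨hb', (haa'.trans_le hab').ne'⟩ hab'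

lemma measureReal_Iio_sub_measureReal_Iio (μ : Measure ℝ) [IsFiniteMeasure μ] {u v : ℝ}
    (huv : u ≤ v) : μ.real (Iio v) - μ.real (Iio u) = μ.real (Ico u v) := by
  rw [← Iio_sdiff_Iio, measureReal_sdiff (Iio_subset_Iio huv) measurableSet_Iio]

lemma measure_Icc_div_volume_Icc (μ : Measure ℝ) [IsFiniteMeasure μ] {u v : ℝ} (huv : u < v) :
    μ (Icc u v) / volume (Icc u v) = ENNReal.ofReal (μ.real (Icc u v) / (v - u)) := by
  rw [Real.volume_Icc, ENNReal.ofReal_div_of_pos (sub_pos.2 huv), ofReal_measureReal]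

namespace MonotonicMeasure

variable {μ : Measure ℝ}

lemma measure_Icc_le (hμ : MonotonicMeasure μ) {u v h : ℝ} (hu : 0 ≤ u) (huv : u ≤ v)
    (hh : 0 ≤ h) (hvh : v + h ≤ 1) : μ (Icc v (v + h)) ≤ μ (Icc u (u + h)) := by
  have := hμ u (u + h) (Icc_subset_Icc hu (by linarith)) (v - u) ⟨by linarith, by linarith⟩
  rwa [image_add_const_Icc, show u + (v - u) = v by ring, show u + h + (v - u) = v + h by ring,
    inter_eq_left.mpr (Icc_subset_Icc (by linarith) hvh)] at this

lemma measure_singleton [IsFiniteMeasure μ] (hμ : MonotonicMeasure μ) {p : ℝ} (hp0 : 0 < p)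
    (hp1 : p ≤ 1) : μ {p} = 0 := by
  by_contra hne
  -- an atom at `p` would shift to an atom of at least the same mass at every `q ∈ (0, p]`
  have hatoms : Ioc 0 p ⊆ {q | 0 < μ {q}} := fun q hq =>
    (pos_iff_ne_zero.mpr hne).trans_le <| by
      simpa using hμ.measure_Icc_le hq.1.le hq.2 le_rfl (by simpa using hp1)
  have hcount : {q : ℝ | 0 < μ {q}}.Countable :=
    Measure.countable_meas_pos_of_disjoint_iUnion (As := fun q : ℝ => {q})
      measurableSet_singleton fun _ _ hij => disjoint_singleton.mpr hij
  have := (hcount.mono hatoms).measure_zero volume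
  rw [Real.volume_Ioc, ENNReal.ofReal_eq_zero] at this
  linarith

lemma measure_Ico_eq_measure_Icc [IsFiniteMeasure μ] (hμ : MonotonicMeasure μ) {u v : ℝ}
    (hv0 : 0 < v) (hv1 : v ≤ 1) : μ (Ico u v) = μ (Icc u v) := by
  rw [← Icc_sdiff_right, measure_sdiff_null (hμ.measure_singleton hv0 hv1)]

lemma incrementsAntiOn [IsFiniteMeasure μ] (hμ : MonotonicMeasure μ) :
    IncrementsAntiOn (fun t => μ.real (Iio t)) (Icc 0 1) := by
  intro u v h hu hvh huv hh
  simp only [measureReal_Iio_sub_measureReal_Iio μ (le_add_of_nonneg_right hh)]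
  rcases hh.eq_or_lt with rfl | hpos
  · simp
  refine ENNReal.toReal_mono (measure_ne_top _ _) ?_
  rw [hμ.measure_Ico_eq_measure_Icc (by linarith [hu.1]) hvh.2,
    hμ.measure_Ico_eq_measure_Icc (by linarith [hu.1]) (by linarith [hvh.2])]
  exact hμ.measure_Icc_le hu.1 huv hh hvh.2

lemma concaveOn [IsFiniteMeasure μ] (hμ : MonotonicMeasure μ) :
    ConcaveOn ℝ (Icc 0 1) (fun t => μ.real (Iio t)) :=
  hμ.incrementsAntiOn.concaveOn (fun _ _ _ _ huv => measureReal_mono (Iio_subset_Iio huv))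
    (convex_Icc 0 1)

lemma slope_eq [IsFiniteMeasure μ] (hμ : MonotonicMeasure μ) {u v : ℝ} (huv : u ≤ v)
    (hv0 : 0 < v) (hv1 : v ≤ 1) :
    slope (fun t => μ.real (Iio t)) u v = μ.real (Icc u v) / (v - u) := by
  rw [slope_def_field, measureReal_Iio_sub_measureReal_Iio μ huv, measureReal_def,
    hμ.measure_Ico_eq_measure_Icc hv0 hv1, measureReal_def]

end MonotonicMeasure

theorem stmt4_general (μ : Measure ℝ) [IsProbabilityMeasure μ]
    (hmono : MonotonicMeasure μ)
    (a a' b b' : ℝ) (ha : a < a') (hb : b < b')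
    (hA : Set.Icc a a' ⊆ Set.Icc 0 1) (hB : Set.Icc b b' ⊆ Set.Icc 0 1)
    (hinf : a ≤ b) (hsup : a' ≤ b') :
    μ (Set.Icc b b') / volume (Set.Icc b b') ≤
      μ (Set.Icc a a') / volume (Set.Icc a a') := by
  have hamem : a ∈ Icc (0 : ℝ) 1 := hA (left_mem_Icc.2 ha.le)
  have ha'mem : a' ∈ Icc (0 : ℝ) 1 := hA (right_mem_Icc.2 ha.le)
  have hbmem : b ∈ Icc (0 : ℝ) 1 := hB (left_mem_Icc.2 hb.le)
  have hb'mem : b' ∈ Icc (0 : ℝ) 1 := hB (right_mem_Icc.2 hb.le)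
  rw [measure_Icc_div_volume_Icc μ hb, measure_Icc_div_volume_Icc μ ha,
    ← hmono.slope_eq hb.le (hbmem.1.trans_lt hb) hb'mem.2,
    ← hmono.slope_eq ha.le (hamem.1.trans_lt ha) ha'mem.2]
  exact ENNReal.ofReal_le_ofReal <|
    hmono.concaveOn.slope_le_slope hamem ha'mem hbmem hb'mem ha hb hinf hsup

theorem stmt4 (μ : Measure ℝ) [IsProbabilityMeasure μ]
    (hsupp : μ ((Set.Icc (0:ℝ) 1)ᶜ) = 0)
    (hmono : MonotonicMeasure μ)
    (a a' b b' : ℝ) (ha : a < a') (hb : b < b')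
    (hA : Set.Icc a a' ⊆ Set.Icc 0 1) (hB : Set.Icc b b' ⊆ Set.Icc 0 1)
    (hinf : a ≤ b) (hsup : a' ≤ b') :
    μ (Set.Icc b b') / volume (Set.Icc b b') ≤
      μ (Set.Icc a a') / volume (Set.Icc a a') :=
  stmt4_general μ hmono a a' b b' ha hb hA hB hinf hsup
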